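/- In any execution of the greedy bottom-up triplet-forming procedure on a tree T rooted at a degree-1 node with maximum degree 3, the number of triplets formed is at most ⌊t/2⌋, where t is the number of nodes of T. -/

import Mathlib

open scoped Classical

namespace ArtGallery

noncomputable section

/-- Node colors used by the greedy bottom-up triplet-forming procedure. -/
inductive TColor
  | red | orange | green
deriving DecidableEq

/-- A finite rooted tree of maximum degree 3 whose root has degree 1, together with its
parent and depth (level) functions. -/
structure RootedTree (V : Type) [Fintype V] where
  G : SimpleGraph V
  isTree : G.IsTree
  root : V
  parent : V → V
  parent_root : parent root = root
  parent_adj : ∀ v, v ≠ root → G.Adj v (parent v)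
  depth : V → ℕ
  depth_root : depth root = 0
  depth_parent : ∀ v, v ≠ root → depth (parent v) + 1 = depth v
  maxDeg : ∀ v, (G.neighborSet v).ncard ≤ 3
  root_deg : (G.neighborSet root).ncard = 1

/-- A state of the procedure: a coloring of the nodes and the set of triplets formed so far. -/
structure TState (V : Type) where
  color : V → TColor
  trips : Set (Set V)

variable {V : Type} [Fintype V]

/-- The initial state: all leaves orange, all other nodes red, no triplets formed. -/
def initState (T : RootedTree V) : TState V :=
  ⟨fun v => if v ≠ T.root ∧ (T.G.neighborSet v).ncard = 1 then TColor.orange else TColor.red, ∅⟩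

/-- One step of the greedy bottom-up triplet-forming procedure.  Orange nodes are processed
from the deepest level upwards (down to level 2): either two orange siblings are merged with
their parent (which becomes orange, the siblings green), or a lone orange node is merged with
its parent and grandparent (the grandparent becomes orange, the other two green). -/
inductive TStep (T : RootedTree V) : TState V → TState V → Prop
  | pair (s : TState V) (v v' : V)
      (hv : s.color v = TColor.orange) (hv' : s.color v' = TColor.orange)
      (hne : v ≠ v') (hp : T.parent v = T.parent v')
      (hdeep : ∀ w, s.color w = TColor.orange → T.depth w ≤ T.depth v)
      (hd : 2 ≤ T.depth v) :
      TStep T s ⟨fun w => if w = v ∨ w = v' then TColor.green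
                  else if w = T.parent v then TColor.orange else s.color w,
        insert {v, v', T.parent v} s.trips⟩
  | chain (s : TState V) (v : V)
      (hv : s.color v = TColor.orange)
      (hsolo : ∀ v', v' ≠ v → T.parent v' = T.parent v → s.color v' ≠ TColor.orange)
      (hdeep : ∀ w, s.color w = TColor.orange → T.depth w ≤ T.depth v)
      (hd : 2 ≤ T.depth v) :
      TStep T s ⟨fun w => if w = v ∨ w = T.parent v then TColor.green
                  else if w = T.parent (T.parent v) then TColor.orange else s.color w,
        insert {v, T.parent v, T.parent (T.parent v)} s.trips⟩

/-- The procedure has finished its main loop: no orange node at level `≥ 2` remains. -/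
def Terminal (T : RootedTree V) (s : TState V) : Prop :=
  ∀ v, s.color v = TColor.orange → T.depth v < 2

/-- The final family of triplets: if the root is already covered, the triplets formed so far;
otherwise one additional triplet consisting of the root, its child and a grandchild. -/
def FinalTrips (T : RootedTree V) (s : TState V) (F : Set (Set V)) : Prop :=
  ((∃ t ∈ s.trips, T.root ∈ t) ∧ F = s.trips) ∨
  ((∀ t ∈ s.trips, T.root ∉ t) ∧
    ∃ c g : V, c ≠ T.root ∧ T.parent c = T.root ∧ g ≠ c ∧ T.parent g = c ∧
      F = insert {T.root, c, g} s.trips)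

/-! Every triplet turns exactly two non-green nodes green and no node ever stops being green,
so twice the number of triplets is at most the number of green nodes. The delicate point is
that the node which becomes orange is never green: green nodes are closed under taking
children. Indeed, when a node turns green, its children outside the new triplet are not orange
and lie no higher than the deepest orange level, and there no node is red (a red node there
would be internal, so it would have a red child, and so on forever). If the root is still
uncovered at the end, green nodes lie at depth at least 2, so the root and its child are two
further uncharged nodes that pay for the final triplet. -/

namespace RootedTree

variable (T : RootedTree V)

lemma depth_pos_iff {v : V} : 0 < T.depth v ↔ v ≠ T.root := by
  refine ⟨?_, fun h => ?_⟩
  · rintro h rfl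
    simp [T.depth_root] at h
  · have := T.depth_parent v h
    omega

lemma depth_eq_of_parent_eq {v x : V} (hv : v ≠ T.root) (hx : T.parent x = v) :
    T.depth x = T.depth v + 1 := by
  have hxr : x ≠ T.root := by
    rintro rfl
    exact hv (hx ▸ T.parent_root)
  rw [← T.depth_parent x hxr, hx]

/-- Both sides have `|V| - 1` elements. -/
lemma image_parent_edge_eq_edgeFinset :
    (Finset.univ.erase T.root).image (fun u => s(u, T.parent u)) = T.G.edgeFinset := by
  refine Finset.eq_of_subset_of_card_le ?_ ?_
  · simpa [Finset.subset_iff] using fun u hu => T.parent_adj u hu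
  · have hinj : Set.InjOn (fun u => s(u, T.parent u)) (Finset.univ.erase T.root : Finset V) := by
      intro u hu u' hu' h
      simp only [Finset.coe_erase, Finset.coe_univ, Set.mem_sdiff, Set.mem_univ,
        Set.mem_singleton_iff, true_and] at hu hu'
      rcases Sym2.eq_iff.1 h with ⟨h, -⟩ | ⟨h₁, h₂⟩
      · exact h
      · have hu₁ := T.depth_parent u hu
        have hu₂ := T.depth_parent u' hu'
        rw [h₂] at hu₁
        rw [← h₁] at hu₂
        omega
    have := T.isTree.card_edgeFinset
    rw [Finset.card_image_of_injOn hinj, Finset.card_erase_of_mem (Finset.mem_univ _),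
      Finset.card_univ]
    omega

lemma parent_eq_or_parent_eq_of_adj {v w : V} (h : T.G.Adj v w) :
    T.parent v = w ∨ T.parent w = v := by
  have he : s(v, w) ∈ T.G.edgeFinset := SimpleGraph.mem_edgeFinset.2 h
  rw [← T.image_parent_edge_eq_edgeFinset, Finset.mem_image] at he
  obtain ⟨u, -, hu⟩ := he
  rcases Sym2.eq_iff.1 hu with ⟨rfl, rfl⟩ | ⟨rfl, rfl⟩
  · exact Or.inl rfl
  · exact Or.inr rfl

lemma exists_parent_eq_of_ncard_ne_one {x : V} (hx : x ≠ T.root)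
    (hdeg : (T.G.neighborSet x).ncard ≠ 1) : ∃ w, T.parent w = x := by
  have hpos : 0 < (T.G.neighborSet x).ncard :=
    (Set.ncard_pos (Set.toFinite _)).2 ⟨_, T.parent_adj x hx⟩
  obtain ⟨w, hw, hwp⟩ :=
    Set.exists_ne_of_one_lt_ncard (s := T.G.neighborSet x) (by omega) (T.parent x)
  exact ⟨w, (T.parent_eq_or_parent_eq_of_adj hw).resolve_left (Ne.symm hwp)⟩

end RootedTree

namespace TState

/-- The common shape of both kinds of step. -/
def merge {α : Type} (s : TState α) (a b c : α) : TState α :=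
  ⟨fun w => if w = a ∨ w = b then .green else if w = c then .orange else s.color w,
    insert {a, b, c} s.trips⟩

variable {α : Type} {s : TState α} {a b c x : α}

lemma merge_color_eq_red :
    (s.merge a b c).color x = .red ↔ ¬(x = a ∨ x = b) ∧ x ≠ c ∧ s.color x = .red := by
  simp only [merge]
  split_ifs <;> simp_all

lemma merge_color_eq_green (hc : s.color c ≠ .green) :
    (s.merge a b c).color x = .green ↔ x = a ∨ x = b ∨ s.color x = .green := by
  simp only [merge]
  split_ifs with h₁ h₂
  · exact iff_of_true rfl (by tauto)
  · subst h₂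
    simp_all
  · simp_all

end TState

open TState

structure Invariant (T : RootedTree V) (s : TState V) : Prop where
  red_eq_root_or_internal :
    ∀ x, s.color x = .red → x = T.root ∨ (T.G.neighborSet x).ncard ≠ 1
  parent_ne_red : ∀ x, s.color x = .green → s.color (T.parent x) ≠ .red
  green_of_parent : ∀ x, s.color (T.parent x) = .green → s.color x = .green
  two_le_depth :
    (∀ t ∈ s.trips, T.root ∉ t) → ∀ x, s.color x = .green → 2 ≤ T.depth x
  two_mul_card_trips_le : 2 * s.trips.ncard ≤ {x | s.color x = .green}.ncard

lemma invariant_initState (T : RootedTree V) : Invariant T (initState T) := by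
  have hng : ∀ x, (initState T).color x ≠ .green := by
    intro x
    simp only [initState]
    split_ifs <;> simp
  refine ⟨fun x hx => ?_, fun x hx => absurd hx (hng x), fun x hx => absurd hx (hng _),
    fun _ x hx => absurd hx (hng x), by simp [initState]⟩
  by_contra! hc
  have horange : (initState T).color x = .orange := if_pos hc
  simp [horange] at hx

namespace Invariant

variable {T : RootedTree V} {s : TState V}

lemma depth_lt_of_red (hI : Invariant T s) {D : ℕ} (hD : 1 ≤ D)
    (horange : ∀ w, s.color w = .orange → T.depth w ≤ D) {y : V} (hy : s.color y = .red) :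
    T.depth y < D := by
  obtain ⟨z, hz, hmax⟩ := (Finset.univ.filter fun x => s.color x = .red).exists_max_image
    T.depth ⟨y, by simpa using hy⟩
  simp only [Finset.mem_filter, Finset.mem_univ, true_and] at hz hmax
  refine (hmax y hy).trans_lt (Nat.lt_of_not_le fun hzD => ?_)
  have hzr : z ≠ T.root := T.depth_pos_iff.1 (by omega)
  obtain ⟨w, hw⟩ :=
    T.exists_parent_eq_of_ncard_ne_one hzr ((hI.red_eq_root_or_internal z hz).resolve_left hzr)
  have hdw := T.depth_eq_of_parent_eq hzr hw
  have hwred : s.color w = .red := by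
    cases h : s.color w with
    | red => rfl
    | orange => have := horange w h; omega
    | green => exact absurd (hw ▸ hz) (hI.parent_ne_red w h)
  have := hmax w hwred
  omega

lemma color_eq_green (hI : Invariant T s) {D : ℕ} (hD : 1 ≤ D)
    (horange : ∀ w, s.color w = .orange → T.depth w ≤ D) {x : V} (hx : D ≤ T.depth x)
    (hxo : s.color x ≠ .orange) : s.color x = .green := by
  cases h : s.color x with
  | red => exact absurd (hI.depth_lt_of_red hD horange h) (by omega)
  | orange => exact absurd h hxo
  | green => rfl

lemma color_eq_green_of_lt_depth (hI : Invariant T s) {D : ℕ} (hD : 1 ≤ D)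
    (horange : ∀ w, s.color w = .orange → T.depth w ≤ D) {x : V} (hx : D < T.depth x) :
    s.color x = .green :=
  hI.color_eq_green hD horange hx.le fun h => by have := horange x h; omega

lemma merge (hI : Invariant T s) {a b c : V} (hab : a ≠ b) (ha : s.color a ≠ .green)
    (hb : s.color b ≠ .green) (hc : s.color c ≠ .green)
    (hpa : T.parent a = b ∨ T.parent a = c) (hpb : T.parent b = c)
    (hchild : ∀ x, T.parent x = a ∨ T.parent x = b → s.color x = .green ∨ x = a)
    (hdepth : T.root ∉ ({a, b, c} : Set V) → 2 ≤ T.depth a ∧ 2 ≤ T.depth b) :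
    Invariant T (s.merge a b c) where
  red_eq_root_or_internal x hx := hI.red_eq_root_or_internal x (merge_color_eq_red.1 hx).2.2
  parent_ne_red x hx := by
    rw [merge_color_eq_green hc] at hx
    rw [Ne, merge_color_eq_red]
    rcases hx with rfl | rfl | hx
    · rcases hpa with h | h <;> simp [h]
    · simp [hpb]
    · exact fun h => hI.parent_ne_red x hx h.2.2
  green_of_parent x hx := by
    rw [merge_color_eq_green hc] at hx ⊢
    rcases hx with hx | hx | hx
    · rcases hchild x (Or.inl hx) with h | h <;> simp [h]
    · rcases hchild x (Or.inr hx) with h | h <;> simp [h]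
    · exact Or.inr (Or.inr (hI.green_of_parent x hx))
  two_le_depth hroot x hx := by
    simp only [TState.merge, Set.mem_insert_iff, forall_eq_or_imp] at hroot
    rw [merge_color_eq_green hc] at hx
    rcases hx with rfl | rfl | hx
    · exact (hdepth hroot.1).1
    · exact (hdepth hroot.1).2
    · exact hI.two_le_depth hroot.2 x hx
  two_mul_card_trips_le := by
    have hgreen : {x | (s.merge a b c).color x = .green} =
        insert a (insert b {x | s.color x = .green}) := by
      ext x
      simp [merge_color_eq_green hc]
    have hbn : b ∉ {x | s.color x = .green} := hb
    have han : a ∉ insert b {x | s.color x = .green} := by simp [hab, ha]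
    rw [hgreen, Set.ncard_insert_of_notMem han, Set.ncard_insert_of_notMem hbn]
    have := Set.ncard_insert_le ({a, b, c} : Set V) s.trips
    have := hI.two_mul_card_trips_le
    simp only [TState.merge]
    omega

lemma step (hI : Invariant T s) {s' : TState V} (h : TStep T s s') : Invariant T s' := by
  cases h with
  | pair v v' hv hv' hne hp hdeep hd =>
    have hvr : v ≠ T.root := T.depth_pos_iff.1 (by omega)
    have hdv := T.depth_parent v hvr
    have hpr : T.parent v ≠ T.root := T.depth_pos_iff.1 (by omega)
    have hdv' : T.depth v' = T.depth v := by
      rw [T.depth_eq_of_parent_eq hpr hp.symm, T.depth_eq_of_parent_eq hpr rfl]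
    have hv'r : v' ≠ T.root := T.depth_pos_iff.1 (by omega)
    refine hI.merge hne (by simp [hv]) (by simp [hv']) (mt (hI.green_of_parent v) (by simp [hv]))
      (Or.inr rfl) hp.symm (fun x hx => Or.inl ?_) fun _ => ⟨hd, by omega⟩
    refine hI.color_eq_green_of_lt_depth (by omega) hdeep ?_
    rcases hx with hx | hx
    · rw [T.depth_eq_of_parent_eq hvr hx]; omega
    · rw [T.depth_eq_of_parent_eq hv'r hx]; omega
  | chain v hv hsolo hdeep hd =>
    have hvr : v ≠ T.root := T.depth_pos_iff.1 (by omega)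
    have hdv := T.depth_parent v hvr
    have hpr : T.parent v ≠ T.root := T.depth_pos_iff.1 (by omega)
    have hdp := T.depth_parent _ hpr
    have hpv : T.parent v ≠ v := fun h => by rw [h] at hdv; omega
    have hpg : s.color (T.parent v) ≠ .green := mt (hI.green_of_parent v) (by simp [hv])
    refine hI.merge hpv.symm (by simp [hv]) hpg (mt (hI.green_of_parent _) hpg) (Or.inl rfl) rfl
      (fun x hx => ?_) fun hroot => ⟨hd, ?_⟩
    · rcases hx with hx | hx
      · have := T.depth_eq_of_parent_eq hvr hx
        exact Or.inl (hI.color_eq_green_of_lt_depth (by omega) hdeep (by omega))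
      · by_cases hxv : x = v
        · exact Or.inr hxv
        · have := T.depth_eq_of_parent_eq hpr hx
          exact Or.inl (hI.color_eq_green (by omega) hdeep (by omega) (hsolo x hxv hx))
    · have := (T.depth_pos_iff (v := T.parent (T.parent v))).2 fun h => hroot (by simp [← h])
      omega

lemma of_reflTransGen (h : Relation.ReflTransGen (TStep T) (initState T) s) :
    Invariant T s := by
  induction h with
  | refl => exact invariant_initState T
  | tail _ hstep ih => exact ih.step hstep

lemma ncard_green_add_two_le (hI : Invariant T s) (hroot : ∀ t ∈ s.trips, T.root ∉ t) {c : V}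
    (hcr : c ≠ T.root) (hpc : T.parent c = T.root) :
    {x | s.color x = .green}.ncard + 2 ≤ Fintype.card V := by
  have hdc := T.depth_parent c hcr
  rw [hpc, T.depth_root] at hdc
  have hrg : T.root ∉ {x | s.color x = .green} := fun h => by
    have := hI.two_le_depth hroot _ h
    rw [T.depth_root] at this
    omega
  have hcg : c ∉ insert T.root {x | s.color x = .green} := by
    rintro (rfl | h)
    · exact hcr rfl
    · have := hI.two_le_depth hroot _ h
      omega
  have hcard := Set.ncard_le_card (insert c (insert T.root {x | s.color x = .green}))
  rwa [Set.ncard_insert_of_notMem hcg, Set.ncard_insert_of_notMem hrg,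
    Nat.card_eq_fintype_card] at hcard

end Invariant

theorem greedy_triplets_card_general (T : RootedTree V)
    (s : TState V) (hexec : Relation.ReflTransGen (TStep T) (initState T) s)
    (F : Set (Set V)) (hF : FinalTrips T s F) :
    F.ncard ≤ Fintype.card V / 2 := by
  have hI := Invariant.of_reflTransGen hexec
  have hcount := hI.two_mul_card_trips_le
  rw [Nat.le_div_iff_mul_le two_pos]
  rcases hF with ⟨-, rfl⟩ | ⟨hroot, c, g, hcr, hpc, -, -, rfl⟩
  · have := Set.ncard_le_card {x | s.color x = .green}
    rw [Nat.card_eq_fintype_card] at this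
    omega
  have := hI.ncard_green_add_two_le hroot hcr hpc
  have := Set.ncard_insert_le ({T.root, c, g} : Set V) s.trips
  omega

/-- In any execution of the greedy bottom-up triplet-forming procedure on a
rooted tree `T` of maximum degree 3 with degree-1 root, the number of triplets formed is at
most `⌊t/2⌋`, where `t` is the number of nodes of `T`. -/
theorem greedy_triplets_card (T : RootedTree V) (hdepth : ∃ v, 2 ≤ T.depth v)
    (s : TState V) (hexec : Relation.ReflTransGen (TStep T) (initState T) s)
    (hterm : Terminal T s) (F : Set (Set V)) (hF : FinalTrips T s F) :
    F.ncard ≤ Fintype.card V / 2 :=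
  greedy_triplets_card_general T s hexec F hF

end
end ArtGallery
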